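/- In the particular setting of Lemma 1 of the paper: with K symmetric positive definite, K̂ symmetric positive definite, B = I + σ⁻²K, α ∈ ℝⁿ, the KL divergence between p̄ = N(Kα, KB⁻¹) and p = N(0, K̂) equals (1/2)[−log det(K̂⁻¹K) + log det B + tr(K̂⁻¹K B⁻¹) + αᵀKα + αᵀK(K̂⁻¹K − I)α − n]. -/

import Mathlib

/-!
Both densities are Gaussian, so `log (p̄ / p)` is a quadratic polynomial in `x - Kα`. Writing
`K B⁻¹ = L Lᵀ` and substituting `x = Kα + L y` turns `p̄(x) dx` into the standard Gaussian density
in `y`, under which `E[yᵀ A y + wᵀ y + c] = tr A + c` because `E[y_i y_j] = δ_ij` and `E[y_i] = 0`.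
This gives the general formula

  `D(N(m₁, S₁) ‖ N(m₂, S₂)) = ½ [tr(S₂⁻¹ S₁) + (m₁ - m₂)ᵀ S₂⁻¹ (m₁ - m₂) - n`
  `                               + log det S₂ - log det S₁]`,

which is specialised to `m₁ = Kα`, `S₁ = K B⁻¹ = (K⁻¹ + σ⁻² I)⁻¹`, `m₂ = 0`, `S₂ = K̂`.
-/

open Real Matrix MeasureTheory

/-- Multivariate normal density with mean `m` and covariance `S`. -/
noncomputable def mvnPdf {ι : Type*} [Fintype ι] [DecidableEq ι]
    (m : ι → ℝ) (S : Matrix ι ι ℝ) (x : ι → ℝ) : ℝ :=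
  (2 * Real.pi) ^ (-(Fintype.card ι : ℝ) / 2) * S.det ^ (-(1 : ℝ) / 2) *
    Real.exp (-(1 / 2) * ((x - m) ⬝ᵥ (S⁻¹ *ᵥ (x - m))))

open ProbabilityTheory
open scoped NNReal MatrixOrder

lemma integrable_pow_mul_gaussianPDFReal (μ : ℝ) {v : ℝ≥0} (hv : v ≠ 0) (p : ℕ) :
    Integrable (fun t : ℝ => t ^ p * gaussianPDFReal μ v t) := by
  have h : Integrable (fun t : ℝ => t ^ p) (gaussianReal μ v) :=
    integrable_pow_of_mem_interior_integrableExpSet (X := fun t => t) (by simp) p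
  rw [gaussianReal_of_var_ne_zero _ hv,
    integrable_withDensity_iff_integrable_smul' (measurable_gaussianPDF μ v)
      (Filter.Eventually.of_forall fun _ => gaussianPDF_lt_top)] at h
  simpa [toReal_gaussianPDF, mul_comm] using h

lemma integral_pow_mul_gaussianPDFReal (μ : ℝ) {v : ℝ≥0} (hv : v ≠ 0) (p : ℕ) :
    ∫ t : ℝ, t ^ p * gaussianPDFReal μ v t = ∫ t, t ^ p ∂gaussianReal μ v := by
  simp [integral_gaussianReal_eq_integral_smul hv, mul_comm]

lemma integral_sq_gaussianReal (μ : ℝ) (v : ℝ≥0) : ∫ t, t ^ 2 ∂gaussianReal μ v = v + μ ^ 2 := by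
  have h := variance_eq_sub (memLp_id_gaussianReal (μ := μ) (v := v) 2)
  simp only [variance_id_gaussianReal, integral_id_gaussianReal, Pi.pow_apply, id] at h
  linarith

section

variable {ι : Type*} [Fintype ι]

lemma mulVec_dotProduct_mulVec_mulVec (L A : Matrix ι ι ℝ) (y z : ι → ℝ) :
    (L *ᵥ y) ⬝ᵥ (A *ᵥ (L *ᵥ z)) = y ⬝ᵥ ((Lᵀ * A * L) *ᵥ z) := by
  rw [mul_assoc, ← mulVec_mulVec, dotProduct_mulVec y, vecMul_transpose, mulVec_mulVec]

lemma add_dotProduct_mulVec_add (A : Matrix ι ι ℝ) (u d : ι → ℝ) :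
    (u + d) ⬝ᵥ (A *ᵥ (u + d)) =
      u ⬝ᵥ (A *ᵥ u) + (A *ᵥ d + Aᵀ *ᵥ d) ⬝ᵥ u + d ⬝ᵥ (A *ᵥ d) := by
  rw [mulVec_add, dotProduct_add, add_dotProduct, add_dotProduct, add_dotProduct,
    dotProduct_comm (A *ᵥ d) u, dotProduct_mulVec d A u, ← mulVec_transpose]
  ring

noncomputable def stdGaussianPDF (y : ι → ℝ) : ℝ := ∏ k, gaussianPDFReal 0 1 (y k)

lemma stdGaussianPDF_eq (y : ι → ℝ) :
    stdGaussianPDF y = (2 * π) ^ (-(Fintype.card ι : ℝ) / 2) * exp (-(1 / 2) * (y ⬝ᵥ y)) := by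
  simp only [stdGaussianPDF, gaussianPDFReal_def, Finset.prod_mul_distrib, Finset.prod_const,
    ← exp_sum, NNReal.coe_one, mul_one, sub_zero, Finset.card_univ]
  congr 1
  · rw [sqrt_eq_rpow, ← rpow_neg_one, ← rpow_mul (by positivity), ← rpow_natCast,
      ← rpow_mul (by positivity)]
    ring_nf
  · simp only [dotProduct, Finset.mul_sum]
    exact congrArg exp (Finset.sum_congr rfl fun k _ => by ring)

lemma integrable_prod_pow_mul_gaussianPDFReal (p : ι → ℕ) :
    Integrable (fun y : ι → ℝ => ∏ k, y k ^ p k * gaussianPDFReal 0 1 (y k)) :=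
  Integrable.fintype_prod (f := fun k t => t ^ p k * gaussianPDFReal 0 1 t)
    fun k => integrable_pow_mul_gaussianPDFReal 0 one_ne_zero (p k)

lemma integral_prod_pow_mul_gaussianPDFReal (p : ι → ℕ) :
    ∫ y : ι → ℝ, ∏ k, y k ^ p k * gaussianPDFReal 0 1 (y k) =
      ∏ k, ∫ t, t ^ p k ∂gaussianReal 0 1 := by
  refine (integral_fintype_prod_eq_prod (μ := fun _ => volume)
    (fun k t => t ^ p k * gaussianPDFReal 0 1 t)).trans ?_
  simp_rw [integral_pow_mul_gaussianPDFReal 0 one_ne_zero]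

lemma integral_stdGaussianPDF : ∫ y : ι → ℝ, stdGaussianPDF y = 1 := by
  simpa [stdGaussianPDF] using integral_prod_pow_mul_gaussianPDFReal (fun _ : ι => 0)

lemma stdGaussianPDF_mul_quadratic (A : Matrix ι ι ℝ) (w : ι → ℝ) (c : ℝ) (y : ι → ℝ) :
    stdGaussianPDF y * (y ⬝ᵥ (A *ᵥ y) + w ⬝ᵥ y + c) =
      ∑ i, ∑ j, A i j * (stdGaussianPDF y * (y i * y j)) +
        ∑ i, w i * (stdGaussianPDF y * y i) + c * stdGaussianPDF y := by
  have hA : stdGaussianPDF y * (y ⬝ᵥ (A *ᵥ y)) =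
      ∑ i, ∑ j, A i j * (stdGaussianPDF y * (y i * y j)) := by
    simp only [dotProduct, mulVec, Finset.mul_sum]
    exact Finset.sum_congr rfl fun i _ => Finset.sum_congr rfl fun j _ => by ring
  have hw : stdGaussianPDF y * (w ⬝ᵥ y) = ∑ i, w i * (stdGaussianPDF y * y i) := by
    simp only [dotProduct, Finset.mul_sum]
    exact Finset.sum_congr rfl fun i _ => by ring
  rw [mul_add, mul_add, hA, hw, mul_comm]

variable [DecidableEq ι]

lemma stdGaussianPDF_mul_apply (i : ι) (y : ι → ℝ) :
    stdGaussianPDF y * y i =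
      ∏ k, y k ^ (if i = k then 1 else 0) * gaussianPDFReal 0 1 (y k) := by
  simp only [stdGaussianPDF, Finset.prod_mul_distrib, Finset.prod_pow_boole, Finset.mem_univ,
    if_true]
  ring

lemma stdGaussianPDF_mul_apply_mul_apply (i j : ι) (y : ι → ℝ) :
    stdGaussianPDF y * (y i * y j) =
      ∏ k, y k ^ ((if i = k then 1 else 0) + (if j = k then 1 else 0)) *
        gaussianPDFReal 0 1 (y k) := by
  simp only [stdGaussianPDF, pow_add, Finset.prod_mul_distrib, Finset.prod_pow_boole,
    Finset.mem_univ, if_true]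
  ring

lemma integral_stdGaussianPDF_mul_apply (i : ι) :
    ∫ y : ι → ℝ, stdGaussianPDF y * y i = 0 := by
  simp_rw [stdGaussianPDF_mul_apply, integral_prod_pow_mul_gaussianPDFReal]
  exact Finset.prod_eq_zero (Finset.mem_univ i) (by simp)

lemma integral_stdGaussianPDF_mul_apply_mul_apply (i j : ι) :
    ∫ y : ι → ℝ, stdGaussianPDF y * (y i * y j) = if i = j then 1 else 0 := by
  simp_rw [stdGaussianPDF_mul_apply_mul_apply, integral_prod_pow_mul_gaussianPDFReal]
  split_ifs with hij
  · subst hij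
    refine Finset.prod_eq_one fun k _ => ?_
    by_cases hk : i = k <;> simp [hk, integral_sq_gaussianReal]
  · exact Finset.prod_eq_zero (Finset.mem_univ i) (by simp [Ne.symm hij])

lemma integral_stdGaussianPDF_mul_quadratic (A : Matrix ι ι ℝ) (w : ι → ℝ) (c : ℝ) :
    ∫ y : ι → ℝ, stdGaussianPDF y * (y ⬝ᵥ (A *ᵥ y) + w ⬝ᵥ y + c) = A.trace + c := by
  have hAij (i j : ι) : Integrable fun y : ι → ℝ => A i j * (stdGaussianPDF y * (y i * y j)) := by
    simpa only [stdGaussianPDF_mul_apply_mul_apply] using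
      (integrable_prod_pow_mul_gaussianPDFReal _).const_mul (A i j)
  have hwi (i : ι) : Integrable fun y : ι → ℝ => w i * (stdGaussianPDF y * y i) := by
    simpa only [stdGaussianPDF_mul_apply] using
      (integrable_prod_pow_mul_gaussianPDFReal _).const_mul (w i)
  have hc : Integrable fun y : ι → ℝ => c * stdGaussianPDF y := by
    simpa [stdGaussianPDF] using
      (integrable_prod_pow_mul_gaussianPDFReal (fun _ : ι => 0)).const_mul c
  have hA := integrable_finsetSum Finset.univ fun i _ =>
    integrable_finsetSum Finset.univ fun j _ => hAij i j
  have hw := integrable_finsetSum Finset.univ fun i _ => hwi i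
  simp_rw [stdGaussianPDF_mul_quadratic]
  rw [integral_add (hA.fun_add hw) hc, integral_add hA hw, integral_finsetSum _ fun i _ => hwi i,
    integral_finsetSum _ fun i _ => integrable_finsetSum _ fun j _ => hAij i j, trace]
  have hAi (i : ι) :
      ∫ y : ι → ℝ, ∑ j, A i j * (stdGaussianPDF y * (y i * y j)) = A i i := by
    rw [integral_finsetSum _ fun j _ => hAij i j]
    simp [integral_const_mul, integral_stdGaussianPDF_mul_apply_mul_apply]
  simp [hAi, integral_const_mul, integral_stdGaussianPDF_mul_apply, integral_stdGaussianPDF]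

lemma integral_comp_mulVec {L : Matrix ι ι ℝ} (hL : L.det ≠ 0) (G : (ι → ℝ) → ℝ) :
    ∫ y, G (L *ᵥ y) = |L.det|⁻¹ * ∫ x, G x := by
  have hL' : LinearMap.det (toLin' L) ≠ 0 := by simpa using hL
  have hemb : MeasurableEmbedding (toLin' L) :=
    ((toLin' L).equivOfDetNeZero hL').toContinuousLinearEquiv.toHomeomorph.measurableEmbedding
  have h := hemb.integral_map (μ := volume) G
  rw [Real.map_matrix_volume_pi_eq_smul_volume_pi hL, integral_smul_measure,
    ENNReal.toReal_ofReal (by positivity)] at h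
  exact h.symm.trans (by simp [abs_inv])

lemma integral_eq_abs_det_mul_integral_comp_add_mulVec {L : Matrix ι ι ℝ} (hL : L.det ≠ 0)
    (m : ι → ℝ) (F : (ι → ℝ) → ℝ) :
    ∫ x, F x = |L.det| * ∫ y, F (m + L *ᵥ y) := by
  rw [integral_comp_mulVec hL (fun x => F (m + x)), integral_add_left_eq_self,
    mul_inv_cancel_left₀ (abs_ne_zero.mpr hL)]

lemma mvnPdf_pos {S : Matrix ι ι ℝ} (hS : 0 < S.det) (m x : ι → ℝ) : 0 < mvnPdf m S x := by
  unfold mvnPdf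
  positivity

lemma log_mvnPdf {S : Matrix ι ι ℝ} (hS : 0 < S.det) (m x : ι → ℝ) :
    log (mvnPdf m S x) = -(Fintype.card ι / 2) * log (2 * π) - 1 / 2 * log S.det -
      1 / 2 * ((x - m) ⬝ᵥ (S⁻¹ *ᵥ (x - m))) := by
  rw [mvnPdf, log_mul (by positivity) (exp_pos _).ne', log_mul (by positivity) (by positivity),
    log_rpow (by positivity), log_rpow hS, log_exp]
  ring

lemma mvnPdf_add_mulVec {S L : Matrix ι ι ℝ} (hLS : L * Lᵀ = S) (hL : L.det ≠ 0)
    (m y : ι → ℝ) : mvnPdf m S (m + L *ᵥ y) = |L.det|⁻¹ * stdGaussianPDF y := by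
  have hLT : Lᵀ.det ≠ 0 := by rwa [det_transpose]
  have hquad : Lᵀ * S⁻¹ * L = 1 := by
    rw [← hLS, Matrix.mul_inv_rev, ← mul_assoc, mul_nonsing_inv _ hLT.isUnit, one_mul,
      nonsing_inv_mul _ hL.isUnit]
  have hdet : S.det ^ (-(1 : ℝ) / 2) = |L.det|⁻¹ := by
    rw [← hLS, det_mul, det_transpose, ← sq, neg_div, rpow_neg (sq_nonneg _), ← sqrt_eq_rpow,
      sqrt_sq_eq_abs]
  rw [mvnPdf, add_sub_cancel_left, mulVec_dotProduct_mulVec_mulVec, hquad, one_mulVec, hdet,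
    stdGaussianPDF_eq]
  ring

lemma integral_mvnPdf_mul_quadratic {S : Matrix ι ι ℝ} (hS : S.PosDef) (m : ι → ℝ)
    (M : Matrix ι ι ℝ) (w : ι → ℝ) (c : ℝ) :
    ∫ x, mvnPdf m S x * ((x - m) ⬝ᵥ (M *ᵥ (x - m)) + w ⬝ᵥ (x - m) + c) =
      (M * S).trace + c := by
  obtain ⟨L, hLS⟩ : ∃ L : Matrix ι ι ℝ, L * Lᵀ = S := by
    obtain ⟨a, ha⟩ := CStarAlgebra.nonneg_iff_eq_star_mul_self.mp hS.posSemidef.nonneg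
    exact ⟨aᵀ, by simpa [star_eq_conjTranspose] using ha.symm⟩
  have hL : L.det ≠ 0 := by
    have h := hS.det_pos
    rw [← hLS, det_mul, det_transpose] at h
    exact left_ne_zero_of_mul h.ne'
  have hintegrand (y : ι → ℝ) :
      mvnPdf m S (m + L *ᵥ y) * ((m + L *ᵥ y - m) ⬝ᵥ (M *ᵥ (m + L *ᵥ y - m)) +
        w ⬝ᵥ (m + L *ᵥ y - m) + c) =
      |L.det|⁻¹ * (stdGaussianPDF y * (y ⬝ᵥ ((Lᵀ * M * L) *ᵥ y) + (Lᵀ *ᵥ w) ⬝ᵥ y + c)) := by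
    rw [mvnPdf_add_mulVec hLS hL, add_sub_cancel_left, mulVec_dotProduct_mulVec_mulVec,
      dotProduct_mulVec w L y, ← mulVec_transpose, mul_assoc]
  rw [integral_eq_abs_det_mul_integral_comp_add_mulVec hL m]
  simp_rw [hintegrand, integral_const_mul, integral_stdGaussianPDF_mul_quadratic]
  rw [mul_inv_cancel_left₀ (abs_ne_zero.mpr hL), trace_mul_comm, ← mul_assoc, hLS,
    trace_mul_comm]

theorem integral_mvnPdf_mul_log_div_mvnPdf {S₁ S₂ : Matrix ι ι ℝ} (hS₁ : S₁.PosDef)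
    (hS₂ : 0 < S₂.det) (m₁ m₂ : ι → ℝ) :
    ∫ x, mvnPdf m₁ S₁ x * log (mvnPdf m₁ S₁ x / mvnPdf m₂ S₂ x) =
      1 / 2 * ((S₂⁻¹ * S₁).trace + (m₁ - m₂) ⬝ᵥ (S₂⁻¹ *ᵥ (m₁ - m₂)) - Fintype.card ι +
        log S₂.det - log S₁.det) := by
  set d := m₁ - m₂
  have hlog (x : ι → ℝ) : log (mvnPdf m₁ S₁ x / mvnPdf m₂ S₂ x) =
      (x - m₁) ⬝ᵥ (((1 / 2 : ℝ) • (S₂⁻¹ - S₁⁻¹)) *ᵥ (x - m₁)) +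
        ((1 / 2 : ℝ) • (S₂⁻¹ *ᵥ d + S₂⁻¹ᵀ *ᵥ d)) ⬝ᵥ (x - m₁) +
        1 / 2 * (log S₂.det - log S₁.det + d ⬝ᵥ (S₂⁻¹ *ᵥ d)) := by
    have hx : x - m₂ = (x - m₁) + d := by simp [d]
    rw [log_div (mvnPdf_pos hS₁.det_pos _ _).ne' (mvnPdf_pos hS₂ _ _).ne',
      log_mvnPdf hS₁.det_pos, log_mvnPdf hS₂, hx, add_dotProduct_mulVec_add, smul_mulVec,
      sub_mulVec, dotProduct_smul, dotProduct_sub (x - m₁), smul_dotProduct, smul_eq_mul,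
      smul_eq_mul]
    ring
  simp_rw [hlog, integral_mvnPdf_mul_quadratic hS₁]
  rw [smul_mul, sub_mul, trace_smul, trace_sub, nonsing_inv_mul _ hS₁.det_pos.ne'.isUnit, trace_one,
    smul_eq_mul]
  ring

lemma Matrix.PosDef.mul_inv_one_add_smul {K : Matrix ι ι ℝ} (hK : K.PosDef) {c : ℝ} (hc : 0 ≤ c) :
    (K * (1 + c • K)⁻¹).PosDef := by
  have h : (1 + c • K) * K⁻¹ = K⁻¹ + c • 1 := by
    rw [add_mul, one_mul, smul_mul, mul_nonsing_inv _ hK.det_pos.ne'.isUnit]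
  have hS : K * (1 + c • K)⁻¹ = (K⁻¹ + c • 1)⁻¹ := by
    rw [← h, Matrix.mul_inv_rev, nonsing_inv_nonsing_inv K hK.det_pos.ne'.isUnit]
  rw [hS]
  exact (hK.inv.add_posSemidef (PosSemidef.one.smul hc)).inv

end

theorem kl_lemma_one_general (n : ℕ) (K Khat : Matrix (Fin n) (Fin n) ℝ)
    (hK : K.PosDef) (hKhat : Khat.PosDef) (σ : ℝ) (α : Fin n → ℝ)
    (B : Matrix (Fin n) (Fin n) ℝ) (hB : B = 1 + (σ ^ 2)⁻¹ • K) :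
    ∫ x : Fin n → ℝ,
        mvnPdf (K *ᵥ α) (K * B⁻¹) x *
          Real.log (mvnPdf (K *ᵥ α) (K * B⁻¹) x / mvnPdf 0 Khat x) =
      (1 / 2) * (-Real.log (Khat⁻¹ * K).det + Real.log B.det +
        (Khat⁻¹ * K * B⁻¹).trace + α ⬝ᵥ (K *ᵥ α) +
        α ⬝ᵥ ((K * (Khat⁻¹ * K - 1)) *ᵥ α) - n) := by
  have hc : 0 ≤ (σ ^ 2)⁻¹ := by positivity
  have hS : (K * B⁻¹).PosDef := hB ▸ hK.mul_inv_one_add_smul hc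
  have hBdet : 0 < B.det := hB ▸ (PosDef.one.add_posSemidef (hK.posSemidef.smul hc)).det_pos
  have hlogS : log (K * B⁻¹).det = log K.det - log B.det := by
    rw [det_mul, det_nonsing_inv, Ring.inverse_eq_inv',
      log_mul hK.det_pos.ne' (inv_ne_zero hBdet.ne'), log_inv, sub_eq_add_neg]
  have hlogQ : log (Khat⁻¹ * K).det = log K.det - log Khat.det := by
    rw [det_mul, det_nonsing_inv, Ring.inverse_eq_inv',
      log_mul (inv_ne_zero hKhat.det_pos.ne') hK.det_pos.ne', log_inv, neg_add_eq_sub]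
  have hquad : (K *ᵥ α) ⬝ᵥ (Khat⁻¹ *ᵥ (K *ᵥ α)) =
      α ⬝ᵥ (K *ᵥ α) + α ⬝ᵥ ((K * (Khat⁻¹ * K - 1)) *ᵥ α) := by
    rw [mulVec_dotProduct_mulVec_mulVec, (isHermitian_iff_isSymm.mp hK.isHermitian).eq, mul_sub,
      mul_one, sub_mulVec, dotProduct_sub, mul_assoc]
    ring
  rw [integral_mvnPdf_mul_log_div_mvnPdf hS hKhat.det_pos, sub_zero, hquad, hlogS, hlogQ,
    Fintype.card_fin, mul_assoc]
  ring

/-- KL divergence in the setting of Lemma 1: with `B = I + σ⁻²K`,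
`D[N(Kα, KB⁻¹) ‖ N(0, K̂)] = ½[-log det(K̂⁻¹K) + log det B + tr(K̂⁻¹KB⁻¹)
  + αᵀKα + αᵀK(K̂⁻¹K - I)α - n]`. -/
theorem kl_lemma_one (n : ℕ) (K Khat : Matrix (Fin n) (Fin n) ℝ)
    (hK : K.PosDef) (hKhat : Khat.PosDef) (σ : ℝ) (hσ : 0 < σ) (α : Fin n → ℝ)
    (B : Matrix (Fin n) (Fin n) ℝ) (hB : B = 1 + (σ ^ 2)⁻¹ • K) :
    ∫ x : Fin n → ℝ,
        mvnPdf (K *ᵥ α) (K * B⁻¹) x *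
          Real.log (mvnPdf (K *ᵥ α) (K * B⁻¹) x / mvnPdf 0 Khat x) =
      (1 / 2) * (-Real.log (Khat⁻¹ * K).det + Real.log B.det +
        (Khat⁻¹ * K * B⁻¹).trace + α ⬝ᵥ (K *ᵥ α) +
        α ⬝ᵥ ((K * (Khat⁻¹ * K - 1)) *ᵥ α) - n) :=
  kl_lemma_one_general n K Khat hK hKhat σ α B hB
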